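/- Let f : A → B be a definable map between definable sets in an o-minimal structure, and Sp(f) : Sp(A) → Sp(B) the induced map on spectra. Then f is an open map if and only if Sp(f) is open, and f is definably closed (images of definable closed sets are closed) if and only if Sp(f) is a closed map. -/

import Mathlib

open FirstOrder Set Classical

/-- `Defin L M s` : the set `s ⊆ Mᵏ` is definable in the structure `M` with parameters from `M`. -/
def Defin (L : FirstOrder.Language) (M : Type) [L.Structure M] {k : ℕ}
    (s : Set (Fin k → M)) : Prop :=
  Set.Definable (Set.univ : Set M) L s

/-- `M` is an o-minimal structure: the order is definable, and every definable subset of `M`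
is a finite union of points and open intervals (possibly unbounded). -/
def IsOMin (L : FirstOrder.Language) (M : Type) [L.Structure M] [LinearOrder M] : Prop :=
  Set.Definable (Set.univ : Set M) L {p : Fin 2 → M | p 0 < p 1} ∧
  ∀ s : Set (Fin 1 → M), Defin L M s →
    ∃ (F : Finset M) (n : ℕ) (J : Fin n → Set M),
      (∀ i, (∃ a b, J i = Set.Ioo a b) ∨ (∃ a, J i = Set.Ioi a) ∨
            (∃ b, J i = Set.Iio b) ∨ J i = Set.univ) ∧
      (fun p : Fin 1 → M => p 0) '' s = ↑F ∪ ⋃ i, J i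

/-- `M` expands an ordered group: the graph of addition is definable. -/
def ExpandsGroup (L : FirstOrder.Language) (M : Type) [L.Structure M] [Add M] : Prop :=
  Set.Definable (Set.univ : Set M) L {p : Fin 3 → M | p 0 + p 1 = p 2}

/-- `M` expands a (real closed, by o-minimality) field: graphs of `+` and `*` are definable. -/
def ExpandsField (L : FirstOrder.Language) (M : Type) [L.Structure M] [Add M] [Mul M] : Prop :=
  Set.Definable (Set.univ : Set M) L {p : Fin 3 → M | p 0 + p 1 = p 2} ∧
  Set.Definable (Set.univ : Set M) L {p : Fin 3 → M | p 0 * p 1 = p 2}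

/-- o-minimal dimension of a subset of `Mᵏ` : the largest `d` such that some coordinate
projection onto `M^d` has nonempty interior; `-1` for the empty set. -/

noncomputable def odim {M : Type} [TopologicalSpace M] {k : ℕ} (s : Set (Fin k → M)) : ℤ :=
  if s.Nonempty then
    ((sSup {d : ℕ | ∃ f : Fin d → Fin k, Function.Injective f ∧
      (interior ((fun x : Fin k → M => x ∘ f) '' s)).Nonempty} : ℕ) : ℤ)
  else -1

/-- A point of the o-minimal spectrum `Sp A`: a complete type over `M` concentrated on `A`,
presented as an ultrafilter on the Boolean algebra of definable subsets of `A`. -/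
structure OType (L : FirstOrder.Language) (M : Type) [L.Structure M] {k : ℕ}
    (A : Set (Fin k → M)) where
  sets : Set (Set (Fin k → M))
  definable_mem : ∀ s ∈ sets, Defin L M s
  subset_mem : ∀ s ∈ sets, s ⊆ A
  top_mem : A ∈ sets
  nonempty_mem : ∀ s ∈ sets, s.Nonempty
  inter_mem : ∀ s ∈ sets, ∀ t ∈ sets, s ∩ t ∈ sets
  complete : ∀ s : Set (Fin k → M), Defin L M s → s ⊆ A → (s ∈ sets ∨ A \ s ∈ sets)

/-- The spectral topology on `Sp A`, generated by the sets `Sp U` for `U` open definable. -/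
instance OType.topology (L : FirstOrder.Language) (M : Type) [L.Structure M] [TopologicalSpace M]
    {k : ℕ} (A : Set (Fin k → M)) : TopologicalSpace (OType L M A) :=
  TopologicalSpace.generateFrom
    {V | ∃ U : Set (Fin k → M), IsOpen U ∧ Defin L M U ∧
      V = {x : OType L M A | U ∩ A ∈ x.sets}}

/-- The dimension of a type: the minimal dimension of a definable set on which it concentrates. -/
noncomputable def OType.tdim {L : FirstOrder.Language} {M : Type} [L.Structure M]
    [TopologicalSpace M] {k : ℕ} {A : Set (Fin k → M)} (x : OType L M A) : ℤ :=
  sInf {d : ℤ | ∃ s ∈ x.sets, odim s = d}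

/-- `F` is the map `Sp f : Sp A → Sp B` induced by the definable map `f : A → B`
(pushforward of types: `t ∈ Sp f (x)` iff `f⁻¹(t) ∈ x`). -/
def IsSpecMap (L : FirstOrder.Language) (M : Type) [L.Structure M] {k h : ℕ}
    (A : Set (Fin k → M)) (B : Set (Fin h → M)) (f : (Fin k → M) → (Fin h → M))
    (F : OType L M A → OType L M B) : Prop :=
  ∀ (x : OType L M A) (t : Set (Fin h → M)),
    t ∈ (F x).sets ↔ (Defin L M t ∧ t ⊆ B ∧ A ∩ f ⁻¹' t ∈ x.sets)

/-!
A type is an ultrafilter on the definable subsets of `A`, and `Sp f` pushes it forward along `f`.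
By compactness, a type over `B` containing `f(s)` lifts to a type over `A` containing `s`, so
`Sp f (Sp s) = Sp (f s)`. For definable `s ⊆ A`, `Sp s` is open (closed) exactly when `s` is
relatively open (closed) in `A`: one direction tests on principal types, the other uses that
closures of definable sets are definable. This settles both equivalences on the basic sets
`Sp (U ∩ A)`. To see that `Sp f` maps an arbitrary closed `Z` to a closed set, lift a point of the
closure of `Sp f (Z)` through the directed family of relatively closed definable `C` with
`Z ⊆ Sp C`.
-/

open TopologicalSpace

section Definability

variable {L : FirstOrder.Language} {M : Type*} [L.Structure M] {α β : Type*}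

theorem definable_image_of_definable_graph [Finite α] {f : (α → M) → (β → M)}
    (hf : (univ : Set M).Definable L {w : α ⊕ β → M | f (w ∘ Sum.inl) = w ∘ Sum.inr})
    {s : Set (α → M)} (hs : (univ : Set M).Definable L s) :
    (univ : Set M).Definable L (f '' s) := by
  have hgraph : (univ : Set M).Definable L {w : β ⊕ α → M | f (w ∘ Sum.inr) = w ∘ Sum.inl} :=
    hf.preimage_comp Sum.swap
  convert (hgraph.inter (hs.preimage_comp Sum.inr)).exists_of_finite using 1
  ext y
  simp [and_comm, eq_comm]

theorem definable_preimage_of_definable_graph [Finite β] {f : (α → M) → (β → M)}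
    (hf : (univ : Set M).Definable L {w : α ⊕ β → M | f (w ∘ Sum.inl) = w ∘ Sum.inr})
    {t : Set (β → M)} (ht : (univ : Set M).Definable L t) :
    (univ : Set M).Definable L (f ⁻¹' t) := by
  convert (hf.inter (ht.preimage_comp Sum.inr)).exists_of_finite using 1
  ext x
  simp

theorem definable_of_subsingleton [Subsingleton M] (s : Set (α → M)) :
    (univ : Set M).Definable L s := by
  rcases s.eq_empty_or_nonempty with rfl | hs
  · exact definable_empty
  · rw [Subsingleton.eq_univ_of_nonempty hs]
    exact definable_univ

end Definability

section UnivPiIoo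


variable {M : Type*} [LinearOrder M] [TopologicalSpace M] [OrderTopology M] {α : Type*}

theorem isTopologicalBasis_univ_pi_Ioo [Finite α] [NoMaxOrder M] [NoMinOrder M] :
    IsTopologicalBasis
      {s : Set (α → M) | ∃ l r : α → M, s = univ.pi fun i => Ioo (l i) (r i)} := by
  refine isTopologicalBasis_of_isOpen_of_nhds ?_ fun x U hxU hU => ?_
  · rintro _ ⟨l, r, rfl⟩
    exact isOpen_set_pi finite_univ fun i _ => isOpen_Ioo
  · obtain ⟨u, hu, huU⟩ := isOpen_pi_iff'.1 hU x hxU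
    choose l r hlr hsub using fun i =>
      mem_nhds_iff_exists_Ioo_subset.1 ((hu i).1.mem_nhds (hu i).2)
    exact ⟨_, ⟨l, r, rfl⟩, fun i _ => hlr i, (pi_mono fun i _ => hsub i).trans huU⟩

theorem mem_closure_iff_forall_univ_pi_Ioo [Finite α] [NoMaxOrder M] [NoMinOrder M]
    {s : Set (α → M)} {x : α → M} :
    x ∈ closure s ↔ ∀ l r : α → M, (∀ i, l i < x i ∧ x i < r i) →
      ∃ y ∈ s, ∀ i, l i < y i ∧ y i < r i := by
  rw [isTopologicalBasis_univ_pi_Ioo.mem_closure_iff]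
  constructor
  · intro h l r hx
    obtain ⟨y, hy, hys⟩ := h _ ⟨l, r, rfl⟩ fun i _ => hx i
    exact ⟨y, hys, fun i => hy i trivial⟩
  · rintro h _ ⟨l, r, rfl⟩ hx
    obtain ⟨y, hys, hy⟩ := h l r fun i => hx i trivial
    exact ⟨y, fun i _ => hy i, hys⟩

end UnivPiIoo

section DefinableOrder


variable {L : FirstOrder.Language} {M : Type*} [L.Structure M] {α : Type*}

theorem Set.Definable.fiber {β : Type*} [Finite α] [Finite β] {S : Set (α ⊕ β → M)}
    (hS : (univ : Set M).Definable L S) (p : β → M) :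
    (univ : Set M).Definable L {x | Sum.elim x p ∈ S} :=
  hS.preimage_map fun
    | .inl _ => DefinableFun.proj L
    | .inr j => L.definableFun_const _ (mem_univ (p j))

variable [LinearOrder M] (hlt : (univ : Set M).Definable L {p : Fin 2 → M | p 0 < p 1})
include hlt

theorem definable_lt_coord (i j : α) : (univ : Set M).Definable L {w : α → M | w i < w j} :=
  hlt.preimage_comp ![i, j]

theorem definable_between_coord [Finite α] {ι : Type*} (l x r : α → ι) :
    (univ : Set M).Definable L {w : ι → M | ∀ i, w (l i) < w (x i) ∧ w (x i) < w (r i)} := by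
  rw [ofPred_forall]
  exact definable_iInter_of_finite fun i =>
    (definable_lt_coord hlt _ _).inter (definable_lt_coord hlt _ _)

theorem definable_univ_pi_Ioo [Finite α] (l r : α → M) :
    (univ : Set M).Definable L (univ.pi fun i => Ioo (l i) (r i)) := by
  convert (definable_between_coord hlt (M := M) (Sum.inr ∘ Sum.inl) Sum.inl
    (Sum.inr ∘ Sum.inr)).fiber (Sum.elim l r) using 1
  ext x
  simp

open Sum in
/- `x ∈ closure s` iff every box `∏ Ioo (l i) (r i)` around `x` meets `s`; the coordinates are
laid out as `((x ⊕ l) ⊕ r) ⊕ y`. -/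
theorem definable_closure_of_noMaxOrder [Finite α] [TopologicalSpace M] [OrderTopology M]
    [NoMaxOrder M] [NoMinOrder M] {s : Set (α → M)} (hs : (univ : Set M).Definable L s) :
    (univ : Set M).Definable L (closure s) := by
  have hT : (univ : Set M).Definable L {u : ((α ⊕ α) ⊕ α) ⊕ α → M | u ∘ inr ∈ s ∧
      ∀ i, u (inl (inl (inr i))) < u (inr i) ∧ u (inr i) < u (inl (inr i))} :=
    (hs.preimage_comp inr).inter (definable_between_coord hlt _ _ _)
  convert ((definable_between_coord hlt (inl ∘ inr) (inl ∘ inl) inr).compl.union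
    hT.exists_of_finite).forall_of_finite.forall_of_finite using 1
  ext x
  simp [mem_closure_iff_forall_univ_pi_Ioo, imp_iff_not_or, Function.comp_def]

end DefinableOrder

section OrderedGroup


variable {L : FirstOrder.Language} {M : Type*} [L.Structure M] [AddCommGroup M] [LinearOrder M]
  [IsOrderedAddMonoid M] [TopologicalSpace M] [OrderTopology M] {α : Type*} [Finite α]
  (hlt : (univ : Set M).Definable L {p : Fin 2 → M | p 0 < p 1})
include hlt

/- A nontrivial ordered group has no endpoints, and over a trivial one every set is definable. -/
theorem definable_closure {s : Set (α → M)} (hs : (univ : Set M).Definable L s) :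
    (univ : Set M).Definable L (closure s) := by
  rcases subsingleton_or_nontrivial M with _ | _
  · exact definable_of_subsingleton _
  · exact definable_closure_of_noMaxOrder hlt hs

theorem definable_interior {s : Set (α → M)} (hs : (univ : Set M).Definable L s) :
    (univ : Set M).Definable L (interior s) := by
  rw [interior_eq_compl_closure_compl]
  exact (definable_closure hlt hs.compl).compl

theorem isTopologicalBasis_definable_isOpen :
    IsTopologicalBasis {U : Set (α → M) | IsOpen U ∧ (univ : Set M).Definable L U} := by
  rcases subsingleton_or_nontrivial M with _ | _
  · exact isTopologicalBasis_opens.of_isOpen_of_subset (fun U hU => hU.1)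
      fun U hU => ⟨hU, definable_of_subsingleton U⟩
  · refine isTopologicalBasis_univ_pi_Ioo.of_isOpen_of_subset (fun U hU => hU.1) ?_
    rintro _ ⟨l, r, rfl⟩
    exact ⟨isTopologicalBasis_univ_pi_Ioo.isOpen ⟨l, r, rfl⟩, definable_univ_pi_Ioo hlt l r⟩

theorem exists_definable_isOpen_inter_eq {A s V : Set (α → M)}
    (hA : (univ : Set M).Definable L A) (hs : (univ : Set M).Definable L s) (hV : IsOpen V)
    (hsV : s = V ∩ A) : ∃ W, IsOpen W ∧ (univ : Set M).Definable L W ∧ s = W ∩ A := by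
  have hVW : V ⊆ interior (s ∪ Aᶜ) :=
    interior_maximal (fun p hp => or_iff_not_imp_right.2 fun hpA => hsV ▸ ⟨hp, not_not.1 hpA⟩) hV
  refine ⟨interior (s ∪ Aᶜ), isOpen_interior, definable_interior hlt (hs.union hA.compl), ?_⟩
  refine Subset.antisymm (fun p hp => ?_) fun p ⟨hp, hpA⟩ => ?_
  · exact ⟨hVW (hsV ▸ hp).1, (hsV ▸ hp).2⟩
  · exact (interior_subset hp).resolve_right (not_not.2 hpA)

end OrderedGroup

theorem closure_inter_subset_iff_exists_isOpen {X : Type*} [TopologicalSpace X] {s A : Set X}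
    (hsA : s ⊆ A) : closure s ∩ A ⊆ s ↔ ∃ V, IsOpen V ∧ A \ s = V ∩ A := by
  refine ⟨fun h => ⟨(closure s)ᶜ, isClosed_closure.isOpen_compl, ?_⟩, ?_⟩
  · ext p
    exact ⟨fun ⟨hpA, hps⟩ => ⟨fun hp => hps (h ⟨hp, hpA⟩), hpA⟩,
      fun ⟨hp, hpA⟩ => ⟨hpA, fun hps => hp (subset_closure hps)⟩⟩
  · rintro ⟨V, hV, hsV⟩ p ⟨hp, hpA⟩
    by_contra hps
    obtain ⟨q, hqV, hqs⟩ := mem_closure_iff.1 hp V hV (hsV ▸ ⟨hpA, hps⟩ : p ∈ V ∩ A).1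
    exact (hsV.symm ▸ ⟨hqV, hsA hqs⟩ : q ∈ A \ s).2 hqs

namespace OType


variable {L : FirstOrder.Language} {M : Type} [L.Structure M] {k : ℕ} {A : Set (Fin k → M)}
  {x y : OType L M A} {s t : Set (Fin k → M)}

theorem diff_mem_iff (hs : Defin L M s) (hsA : s ⊆ A) : A \ s ∈ x.sets ↔ s ∉ x.sets := by
  refine ⟨fun hd hs' => ?_, (x.complete s hs hsA).resolve_left⟩
  obtain ⟨p, hps, -, hp⟩ := x.nonempty_mem _ (x.inter_mem _ hs' _ hd)
  exact hp hps

theorem ext_of_sets_subset (h : x.sets ⊆ y.sets) : x = y := by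
  have h' : y.sets ⊆ x.sets := fun s hs => by
    by_contra hsx
    have hsA := y.subset_mem s hs
    exact (diff_mem_iff (y.definable_mem s hs) hsA).1
      (h ((diff_mem_iff (y.definable_mem s hs) hsA).2 hsx)) hs
  cases x
  cases y
  congr
  exact h.antisymm h'

theorem mem_of_superset (hs : s ∈ x.sets) (hst : s ⊆ t) (ht : Defin L M t) (htA : t ⊆ A) :
    t ∈ x.sets := by
  by_contra hnt
  obtain ⟨p, hps, -, hp⟩ := x.nonempty_mem _ (x.inter_mem _ hs _ ((diff_mem_iff ht htA).2 hnt))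
  exact hp (hst hps)

theorem inter_mem_iff (hs : Defin L M s) (hsA : s ⊆ A) (ht : Defin L M t) (htA : t ⊆ A) :
    s ∩ t ∈ x.sets ↔ s ∈ x.sets ∧ t ∈ x.sets :=
  ⟨fun hst => ⟨mem_of_superset hst inter_subset_left hs hsA,
      mem_of_superset hst inter_subset_right ht htA⟩,
    fun ⟨hs', ht'⟩ => x.inter_mem _ hs' _ ht'⟩

def ofUltrafilter (hA : Defin L M A) (U : Ultrafilter (Fin k → M)) (hAU : A ∈ U) :
    OType L M A where
  sets := {s | Defin L M s ∧ s ⊆ A ∧ s ∈ U}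
  definable_mem _ hs := hs.1
  subset_mem _ hs := hs.2.1
  top_mem := ⟨hA, subset_rfl, hAU⟩
  nonempty_mem _ hs := U.nonempty_of_mem hs.2.2
  inter_mem _ hs _ ht :=
    ⟨hs.1.inter ht.1, inter_subset_left.trans hs.2.1, Filter.inter_mem hs.2.2 ht.2.2⟩
  complete s hs hsA := (U.mem_or_compl_mem s).imp (fun h => ⟨hs, hsA, h⟩)
    fun h => ⟨hA.sdiff hs, sdiff_subset, Filter.inter_mem hAU h⟩

variable (A) in
def sp (s : Set (Fin k → M)) : Set (OType L M A) := {x | s ∈ x.sets}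

theorem subset_of_sp_subset (hA : Defin L M A) (hs : Defin L M s) (hsA : s ⊆ A)
    (h : sp A s ⊆ (sp A t : Set (OType L M A))) : s ⊆ t := fun a ha => by
  have hx : ofUltrafilter hA (pure a) (hsA ha) ∈ sp A s := ⟨hs, hsA, Ultrafilter.mem_pure.2 ha⟩
  exact Ultrafilter.mem_pure.1 (h hx).2.2

theorem compl_sp (hs : Defin L M s) (hsA : s ⊆ A) :
    (sp A s : Set (OType L M A))ᶜ = sp A (A \ s) :=
  ext fun _ => (diff_mem_iff hs hsA).symm

theorem sp_inter (hs : Defin L M s) (hsA : s ⊆ A) (ht : Defin L M t) (htA : t ⊆ A) :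
    (sp A (s ∩ t) : Set (OType L M A)) = sp A s ∩ sp A t :=
  ext fun _ => inter_mem_iff hs hsA ht htA

variable [TopologicalSpace M]

theorem isTopologicalBasis_sp (hA : Defin L M A) :
    IsTopologicalBasis {W : Set (OType L M A) |
      ∃ U, IsOpen U ∧ Defin L M U ∧ W = sp A (U ∩ A)} where
  exists_subset_inter := by
    rintro _ ⟨U₁, hU₁, hU₁d, rfl⟩ _ ⟨U₂, hU₂, hU₂d, rfl⟩ x hx
    refine ⟨_, ⟨U₁ ∩ U₂, hU₁.inter hU₂, hU₁d.inter hU₂d, rfl⟩, ?_⟩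
    rw [inter_inter_distrib_right, sp_inter (hU₁d.inter hA) inter_subset_right
      (hU₂d.inter hA) inter_subset_right]
    exact ⟨hx, subset_rfl⟩
  sUnion_eq := sUnion_eq_univ_iff.2 fun x =>
    ⟨_, ⟨univ, isOpen_univ, definable_univ, rfl⟩, (univ_inter A).symm ▸ x.top_mem⟩
  eq_generateFrom := rfl

end OType

namespace OType

variable {L : FirstOrder.Language} {M : Type} [L.Structure M] [AddCommGroup M] [LinearOrder M]
  [IsOrderedAddMonoid M] [TopologicalSpace M] [OrderTopology M]
  (hlt : (univ : Set M).Definable L {p : Fin 2 → M | p 0 < p 1})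
  {k : ℕ} {A s : Set (Fin k → M)}
include hlt

theorem isOpen_sp_iff (hA : Defin L M A) (hs : Defin L M s) (hsA : s ⊆ A) :
    IsOpen (sp A s : Set (OType L M A)) ↔ ∃ V, IsOpen V ∧ s = V ∩ A := by
  refine ⟨fun hopen => ?_, fun ⟨V, hV, hsV⟩ => ?_⟩
  · refine ⟨⋃₀ {V | IsOpen V ∧ V ∩ A ⊆ s}, isOpen_sUnion fun V hV => hV.1,
      Subset.antisymm (fun a ha => ?_) fun p ⟨⟨V, hV, hpV⟩, hpA⟩ => hV.2 ⟨hpV, hpA⟩⟩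
    have hx : ofUltrafilter hA (pure a) (hsA ha) ∈ sp A s := ⟨hs, hsA, Ultrafilter.mem_pure.2 ha⟩
    obtain ⟨_, ⟨U, hU, hUd, rfl⟩, hxU, hUs⟩ :=
      (isTopologicalBasis_sp hA).exists_subset_of_mem_open hx hopen
    exact ⟨⟨U, ⟨hU, subset_of_sp_subset hA (hUd.inter hA) inter_subset_right hUs⟩,
      (Ultrafilter.mem_pure.1 hxU.2.2).1⟩, hsA ha⟩
  · obtain ⟨W, hW, hWd, rfl⟩ := exists_definable_isOpen_inter_eq hlt hA hs hV hsV
    exact (isTopologicalBasis_sp hA).isOpen ⟨W, hW, hWd, rfl⟩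

theorem isClosed_sp_iff (hA : Defin L M A) (hs : Defin L M s) (hsA : s ⊆ A) :
    IsClosed (sp A s : Set (OType L M A)) ↔ closure s ∩ A ⊆ s := by
  rw [← isOpen_compl_iff, compl_sp hs hsA, isOpen_sp_iff hlt hA (hA.sdiff hs) sdiff_subset,
    closure_inter_subset_iff_exists_isOpen hsA]

end OType

theorem definable_sum_graph_of_definable_fin_graph {L : FirstOrder.Language} {M : Type}
    [L.Structure M] {k h : ℕ} {f : (Fin k → M) → (Fin h → M)}
    (hf : Defin L M {p : Fin (k + h) → M |
      f (fun i => p (Fin.castAdd h i)) = fun j => p (Fin.natAdd k j)}) :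
    (univ : Set M).Definable L {w : Fin k ⊕ Fin h → M | f (w ∘ Sum.inl) = w ∘ Sum.inr} := by
  convert hf.preimage_comp finSumFinEquiv.symm using 1
  ext w
  simp [Function.comp_def]

namespace IsSpecMap

open OType

variable {L : FirstOrder.Language} {M : Type} [L.Structure M] {k h : ℕ}
  {A : Set (Fin k → M)} {B : Set (Fin h → M)} {f : (Fin k → M) → (Fin h → M)}
  {F : OType L M A → OType L M B} (hF : IsSpecMap L M A B f F) (hA : Defin L M A)
  (hf : (univ : Set M).Definable L {w : Fin k ⊕ Fin h → M | f (w ∘ Sum.inl) = w ∘ Sum.inr})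
include hF hA hf

theorem image_mem (hmap : MapsTo f A B) {x : OType L M A} {s : Set (Fin k → M)}
    (hs : s ∈ x.sets) : f '' s ∈ (F x).sets := by
  have hfs := definable_image_of_definable_graph hf (x.definable_mem s hs)
  refine (hF x _).2 ⟨hfs, (image_mono (x.subset_mem s hs)).trans hmap.image_subset, ?_⟩
  exact x.mem_of_superset hs (fun p hp => ⟨x.subset_mem s hs hp, mem_image_of_mem f hp⟩)
    (hA.inter (definable_preimage_of_definable_graph hf hfs)) inter_subset_left

/- Compactness: the sets `s ∩ f⁻¹ t` (`s ∈ 𝒟`, `t ∈ y`) form a filter basis of nonempty sets,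
and the definable members of an ultrafilter refining it form the required type `x`. -/
theorem exists_lift {𝒟 : Set (Set (Fin k → M))} (hne : 𝒟.Nonempty)
    (hinter : ∀ s ∈ 𝒟, ∀ t ∈ 𝒟, s ∩ t ∈ 𝒟) (h𝒟 : ∀ s ∈ 𝒟, Defin L M s ∧ s ⊆ A)
    {y : OType L M B} (hy : ∀ s ∈ 𝒟, f '' s ∈ y.sets) : ∃ x, 𝒟 ⊆ x.sets ∧ F x = y := by
  let 𝔅 : FilterBasis (Fin k → M) :=
    { sets := {r | ∃ s ∈ 𝒟, ∃ t ∈ y.sets, r = s ∩ f ⁻¹' t}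
      nonempty := let ⟨s, hs⟩ := hne; ⟨_, s, hs, B, y.top_mem, rfl⟩
      inter_sets := by
        rintro _ _ ⟨s₁, hs₁, t₁, ht₁, rfl⟩ ⟨s₂, hs₂, t₂, ht₂, rfl⟩
        exact ⟨_, ⟨s₁ ∩ s₂, hinter _ hs₁ _ hs₂, t₁ ∩ t₂, y.inter_mem _ ht₁ _ ht₂, rfl⟩,
          fun p hp => ⟨⟨hp.1.1, hp.2.1⟩, hp.1.2, hp.2.2⟩⟩ }
  have : 𝔅.filter.NeBot := 𝔅.hasBasis.neBot_iff.2 fun {r} ⟨s, hs, t, ht, hr⟩ => by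
    obtain ⟨_, ⟨p, hp, rfl⟩, hpt⟩ := y.nonempty_mem _ (y.inter_mem _ (hy s hs) _ ht)
    exact hr ▸ ⟨p, hp, hpt⟩
  obtain ⟨U, hU⟩ := Ultrafilter.exists_le 𝔅.filter
  have hmem : ∀ s ∈ 𝒟, ∀ t ∈ y.sets, s ∩ f ⁻¹' t ∈ U := fun s hs t ht =>
    hU (𝔅.mem_filter_of_mem ⟨s, hs, t, ht, rfl⟩)
  obtain ⟨s₀, hs₀⟩ := hne
  have hAU : A ∈ U :=
    Filter.mem_of_superset (hmem s₀ hs₀ B y.top_mem) (inter_subset_left.trans (h𝒟 s₀ hs₀).2)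
  let x := ofUltrafilter hA U hAU
  have h𝒟x : 𝒟 ⊆ x.sets := fun s hs =>
    ⟨(h𝒟 s hs).1, (h𝒟 s hs).2, Filter.mem_of_superset (hmem s hs B y.top_mem) inter_subset_left⟩
  have hyx : y.sets ⊆ (F x).sets := fun t ht =>
    (hF x t).2 ⟨y.definable_mem t ht, y.subset_mem t ht,
      hA.inter (definable_preimage_of_definable_graph hf (y.definable_mem t ht)), inter_subset_left,
      Filter.mem_of_superset (hmem s₀ hs₀ t ht) fun p hp => ⟨(h𝒟 s₀ hs₀).2 hp.1, hp.2⟩⟩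
  exact ⟨x, h𝒟x, (ext_of_sets_subset hyx).symm⟩

theorem image_sp (hmap : MapsTo f A B) {s : Set (Fin k → M)} (hs : Defin L M s) (hsA : s ⊆ A) :
    F '' sp A s = sp B (f '' s) := by
  refine Subset.antisymm (image_subset_iff.2 fun x hx => hF.image_mem hA hf hmap hx) fun y hy => ?_
  obtain ⟨x, hx, rfl⟩ := hF.exists_lift hA hf (singleton_nonempty s)
    (by rintro _ rfl _ rfl; rw [inter_self]; rfl) (by rintro _ rfl; exact ⟨hs, hsA⟩)
    (by rintro _ rfl; exact hy)
  exact ⟨x, hx rfl, rfl⟩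

end IsSpecMap

namespace IsSpecMap

open OType

variable {L : FirstOrder.Language} {M : Type} [L.Structure M] [AddCommGroup M] [LinearOrder M]
  [IsOrderedAddMonoid M] [TopologicalSpace M] [OrderTopology M]
  (hlt : (univ : Set M).Definable L {p : Fin 2 → M | p 0 < p 1}) {k h : ℕ}
  {A : Set (Fin k → M)} {B : Set (Fin h → M)} {f : (Fin k → M) → (Fin h → M)}
  {F : OType L M A → OType L M B} (hF : IsSpecMap L M A B f F) (hA : Defin L M A)
  (hB : Defin L M B)
  (hf : (univ : Set M).Definable L {w : Fin k ⊕ Fin h → M | f (w ∘ Sum.inl) = w ∘ Sum.inr})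
  (hmap : MapsTo f A B)
include hlt hF hA hB hf hmap

theorem isOpen_image_sp_iff {s : Set (Fin k → M)} (hs : Defin L M s) (hsA : s ⊆ A) :
    IsOpen (F '' sp A s) ↔ ∃ V, IsOpen V ∧ f '' s = V ∩ B := by
  rw [hF.image_sp hA hf hmap hs hsA, isOpen_sp_iff hlt hB (definable_image_of_definable_graph hf hs)
    ((image_mono hsA).trans hmap.image_subset)]

theorem isClosed_image_sp_iff {s : Set (Fin k → M)} (hs : Defin L M s) (hsA : s ⊆ A) :
    IsClosed (F '' sp A s) ↔ closure (f '' s) ∩ B ⊆ f '' s := by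
  rw [hF.image_sp hA hf hmap hs hsA, isClosed_sp_iff hlt hB
    (definable_image_of_definable_graph hf hs) ((image_mono hsA).trans hmap.image_subset)]

theorem isOpenMap (hopen : ∀ U, IsOpen U → ∃ V, IsOpen V ∧ f '' (U ∩ A) = V ∩ B) :
    IsOpenMap F := by
  refine (isTopologicalBasis_sp hA).isOpenMap_iff.2 ?_
  rintro _ ⟨U, hU, hUd, rfl⟩
  exact (hF.isOpen_image_sp_iff hlt hA hB hf hmap (hUd.inter hA) inter_subset_right).2 (hopen U hU)

theorem exists_isOpen_image_eq (hFo : IsOpenMap F) {U : Set (Fin k → M)} (hU : IsOpen U) :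
    ∃ V, IsOpen V ∧ f '' (U ∩ A) = V ∩ B := by
  refine ⟨⋃₀ {V | IsOpen V ∧ V ∩ B ⊆ f '' (U ∩ A)}, isOpen_sUnion fun V hV => hV.1,
    Subset.antisymm ?_ fun b ⟨⟨V, hV, hbV⟩, hbB⟩ => hV.2 ⟨hbV, hbB⟩⟩
  rintro _ ⟨a, ha, rfl⟩
  obtain ⟨W, ⟨hWo, hWd⟩, haW, hWU⟩ :=
    (isTopologicalBasis_definable_isOpen hlt).exists_subset_of_mem_open ha.1 hU
  obtain ⟨V, hV, hWV⟩ := (hF.isOpen_image_sp_iff hlt hA hB hf hmap (hWd.inter hA)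
    inter_subset_right).1 (hFo _ ((isTopologicalBasis_sp hA).isOpen ⟨W, hWo, hWd, rfl⟩))
  have hfa : f a ∈ V ∩ B := hWV ▸ mem_image_of_mem f ⟨haW, ha.2⟩
  exact ⟨⟨V, ⟨hV, hWV ▸ image_mono (inter_subset_inter_left A hWU)⟩, hfa.1⟩, hfa.2⟩

theorem isClosedMap (hclosed : ∀ C, Defin L M C → C ⊆ A → closure C ∩ A ⊆ C →
    closure (f '' C) ∩ B ⊆ f '' C) : IsClosedMap F := by
  intro Z hZ
  refine closure_subset_iff_isClosed.1 fun y hy => ?_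
  let 𝒟 := {C | Defin L M C ∧ C ⊆ A ∧ closure C ∩ A ⊆ C ∧ Z ⊆ sp A C}
  have hinter : ∀ C₁ ∈ 𝒟, ∀ C₂ ∈ 𝒟, C₁ ∩ C₂ ∈ 𝒟 := by
    rintro C₁ ⟨hd₁, hA₁, hc₁, hZ₁⟩ C₂ ⟨hd₂, hA₂, hc₂, hZ₂⟩
    refine ⟨hd₁.inter hd₂, inter_subset_left.trans hA₁, fun p ⟨hp, hpA⟩ =>
      ⟨hc₁ ⟨closure_mono inter_subset_left hp, hpA⟩,
        hc₂ ⟨closure_mono inter_subset_right hp, hpA⟩⟩, ?_⟩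
    rw [sp_inter hd₁ hA₁ hd₂ hA₂]
    exact subset_inter hZ₁ hZ₂
  have hy𝒟 : ∀ C ∈ 𝒟, f '' C ∈ y.sets := by
    rintro C ⟨hd, hCA, hc, hZC⟩
    obtain ⟨x, hx, rfl⟩ := closure_minimal (image_mono hZC)
      ((hF.isClosed_image_sp_iff hlt hA hB hf hmap hd hCA).2 (hclosed C hd hCA hc)) hy
    exact hF.image_mem hA hf hmap hx
  have hA𝒟 : A ∈ 𝒟 := ⟨hA, subset_rfl, inter_subset_right, fun x _ => x.top_mem⟩
  obtain ⟨x, hx𝒟, rfl⟩ :=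
    hF.exists_lift hA hf ⟨A, hA𝒟⟩ hinter (fun C hC => ⟨hC.1, hC.2.1⟩) hy𝒟
  refine mem_image_of_mem F (by_contra fun hxZ => ?_)
  obtain ⟨_, ⟨U, hU, hUd, rfl⟩, hxU, hUZ⟩ :=
    (isTopologicalBasis_sp hA).exists_subset_of_mem_open hxZ hZ.isOpen_compl
  have hcompl : (sp A (U ∩ A) : Set (OType L M A))ᶜ = sp A (A \ U) := by
    rw [compl_sp (hUd.inter hA) inter_subset_right, sdiff_inter_self_eq_sdiff]
  have hAU : A \ U ∈ 𝒟 :=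
    ⟨hA.sdiff hUd, sdiff_subset,
      fun p ⟨hp, hpA⟩ => ⟨hpA, closure_minimal (fun q hq => hq.2) hU.isClosed_compl hp⟩,
      hcompl ▸ subset_compl_comm.1 hUZ⟩
  exact (hcompl ▸ hx𝒟 hAU : x ∈ (sp A (U ∩ A))ᶜ) hxU

theorem closure_image_inter_subset (hFc : IsClosedMap F) {C : Set (Fin k → M)}
    (hC : Defin L M C) (hCA : C ⊆ A) (hCcl : closure C ∩ A ⊆ C) :
    closure (f '' C) ∩ B ⊆ f '' C :=
  (hF.isClosed_image_sp_iff hlt hA hB hf hmap hC hCA).1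
    (hFc _ ((isClosed_sp_iff hlt hA hC hCA).2 hCcl))

end IsSpecMap

theorem stmt15_general {L : FirstOrder.Language} {M : Type} [L.Structure M]
    [AddCommGroup M] [LinearOrder M] [IsOrderedAddMonoid M] [TopologicalSpace M] [OrderTopology M]
    (hmin : IsOMin L M)
    {k h : ℕ} (A : Set (Fin k → M)) (B : Set (Fin h → M))
    (hA : Defin L M A) (hB : Defin L M B)
    (f : (Fin k → M) → (Fin h → M))
    (hfdef : Defin L M
      {p : Fin (k + h) → M |
        f (fun i => p (Fin.castAdd h i)) = fun j => p (Fin.natAdd k j)})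
    (hmap : Set.MapsTo f A B)
    (F : OType L M A → OType L M B) (hF : IsSpecMap L M A B f F) :
    ((∀ U : Set (Fin k → M), IsOpen U →
        ∃ V : Set (Fin h → M), IsOpen V ∧ f '' (U ∩ A) = V ∩ B) ↔ IsOpenMap F) ∧
    ((∀ C : Set (Fin k → M), Defin L M C → C ⊆ A → closure C ∩ A ⊆ C →
        closure (f '' C) ∩ B ⊆ f '' C) ↔ IsClosedMap F) := by
  have hlt := hmin.1
  have hf := definable_sum_graph_of_definable_fin_graph hfdef
  exact ⟨⟨hF.isOpenMap hlt hA hB hf hmap,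
      fun hFo _ hU => hF.exists_isOpen_image_eq hlt hA hB hf hmap hFo hU⟩,
    ⟨hF.isClosedMap hlt hA hB hf hmap,
      fun hFc _ hC hCA hCcl => hF.closure_image_inter_subset hlt hA hB hf hmap hFc hC hCA hCcl⟩⟩

/-- Let `f : A → B` be a definable map between definable sets in an o-minimal structure
(expanding an ordered group), and `Sp f : Sp A → Sp B` the induced map. Then `f` is an open
map iff `Sp f` is open, and `f` is definably closed (images of definable relatively closed
sets are relatively closed) iff `Sp f` is a closed map. -/
theorem stmt15 {L : FirstOrder.Language} {M : Type} [L.Structure M]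
    [AddCommGroup M] [LinearOrder M] [IsOrderedAddMonoid M] [TopologicalSpace M] [OrderTopology M]
    (hmin : IsOMin L M) (hgrp : ExpandsGroup L M)
    {k h : ℕ} (A : Set (Fin k → M)) (B : Set (Fin h → M))
    (hA : Defin L M A) (hB : Defin L M B)
    (f : (Fin k → M) → (Fin h → M))
    (hfdef : Defin L M
      {p : Fin (k + h) → M |
        f (fun i => p (Fin.castAdd h i)) = fun j => p (Fin.natAdd k j)})
    (hmap : Set.MapsTo f A B)
    (F : OType L M A → OType L M B) (hF : IsSpecMap L M A B f F) :
    ((∀ U : Set (Fin k → M), IsOpen U →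
        ∃ V : Set (Fin h → M), IsOpen V ∧ f '' (U ∩ A) = V ∩ B) ↔ IsOpenMap F) ∧
    ((∀ C : Set (Fin k → M), Defin L M C → C ⊆ A → closure C ∩ A ⊆ C →
        closure (f '' C) ∩ B ⊆ f '' C) ↔ IsClosedMap F) :=
  stmt15_general hmin A B hA hB f hfdef hmap F hF
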